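/- arXiv:2111.02702 — 5 statements merged into one kernel-verified Lean document; each statement's English description precedes it below -/
import Mathlib

section
/- Let $Y_1,\dots,Y_M$ be independent real random variables with $\mathbb{E}[Y_i]=1$ and $\mathrm{Var}[Y_i]<\infty$ for each $i$, and set $S_M=\sum_{i=1}^M Y_i$. Then for any $a,b>0$, $\mathbb{E}[(a+bS_M)^{-1}] \le (a+bM/2)^{-1} + (4/a)\,\mathrm{Var}[S_M]/M^2$. -/
/-!
On the event `S < M/2` the integrand is at most `1/a` (as `S ≥ 0`), and off it at most
`(a + b M/2)⁻¹`; Chebyshev's inequality bounds the probability of the event by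
`Var S / (M/2)²`.
-/

open MeasureTheory ProbabilityTheory

lemma inv_add_mul_le_add_indicator {a b t x : ℝ} (ha : 0 < a) (hb : 0 ≤ b) (ht : 0 ≤ t)
    (hx : 0 ≤ x) :
    (a + b * x)⁻¹ ≤ (a + b * t)⁻¹ + (Set.Iio t).indicator (fun _ => a⁻¹) x := by
  by_cases hxt : x < t
  · rw [Set.indicator_of_mem (Set.mem_Iio.2 hxt)]
    have hle : (a + b * x)⁻¹ ≤ a⁻¹ := inv_anti₀ ha (by nlinarith)
    have hpos : 0 ≤ (a + b * t)⁻¹ := by positivity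
    linarith
  · rw [Set.indicator_of_notMem (mt Set.mem_Iio.1 hxt), add_zero]
    exact inv_anti₀ (by positivity) (by nlinarith [not_lt.mp hxt])

section

variable {Ω : Type*} [MeasurableSpace Ω] {μ : Measure Ω} [IsProbabilityMeasure μ] {X : Ω → ℝ}

lemma integral_inv_add_mul_le_add_measureReal_lt {a b t : ℝ} (hX : AEMeasurable X μ)
    (hX0 : ∀ᵐ ω ∂μ, 0 ≤ X ω) (ha : 0 < a) (hb : 0 ≤ b) (ht : 0 ≤ t) :
    μ[fun ω => (a + b * X ω)⁻¹] ≤ (a + b * t)⁻¹ + μ.real {ω | X ω < t} / a := by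
  have hA : NullMeasurableSet {ω | X ω < t} μ := nullMeasurableSet_lt hX aemeasurable_const
  have hbound : ∀ᵐ ω ∂μ,
      (a + b * X ω)⁻¹ ≤ (a + b * t)⁻¹ + {ω | X ω < t}.indicator (fun _ => a⁻¹) ω := by
    filter_upwards [hX0] with ω hω
    exact inv_add_mul_le_add_indicator ha hb ht hω
  have hf : Integrable (fun ω => (a + b * X ω)⁻¹) μ := by
    refine (integrable_const a⁻¹).mono' (by fun_prop : AEMeasurable _ μ).aestronglyMeasurable ?_
    filter_upwards [hX0] with ω hω
    rw [Real.norm_eq_abs, abs_of_nonneg (inv_nonneg.2 (by nlinarith))]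
    exact inv_anti₀ ha (by nlinarith)
  have hind : Integrable ({ω | X ω < t}.indicator fun _ => a⁻¹) μ :=
    (integrable_const _).indicator₀ hA
  calc μ[fun ω => (a + b * X ω)⁻¹]
      ≤ ∫ ω, ((a + b * t)⁻¹ + {ω | X ω < t}.indicator (fun _ => a⁻¹) ω) ∂μ :=
        integral_mono_ae hf ((integrable_const _).add hind) hbound
    _ = (a + b * t)⁻¹ + μ.real {ω | X ω < t} / a := by
        rw [integral_add (integrable_const _) hind, integral_const, integral_indicator₀ hA,
          setIntegral_const]
        simp [div_eq_mul_inv]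

lemma measureReal_lt_half_integral_le (hX : MemLp X 2 μ) (hm : 0 < μ[X]) :
    μ.real {ω | X ω < μ[X] / 2} ≤ 4 * variance X μ / μ[X] ^ 2 := by
  have hsub : {ω | X ω < μ[X] / 2} ⊆ {ω | μ[X] / 2 ≤ |X ω - μ[X]|} := by
    intro ω (hω : X ω < μ[X] / 2)
    exact (by linarith : μ[X] / 2 ≤ -(X ω - μ[X])).trans (neg_le_abs _)
  have hcheb := (measure_mono hsub).trans (meas_ge_le_variance_div_sq hX (half_pos hm))
  calc μ.real {ω | X ω < μ[X] / 2}
      ≤ variance X μ / (μ[X] / 2) ^ 2 :=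
        ENNReal.toReal_le_of_le_ofReal (by have := variance_nonneg X μ; positivity) hcheb
    _ = 4 * variance X μ / μ[X] ^ 2 := by field_simp; ring

lemma integral_inv_add_mul_le_inv_add_variance {a b : ℝ} (hX : MemLp X 2 μ)
    (hX0 : ∀ᵐ ω ∂μ, 0 ≤ X ω) (hm : 0 < μ[X]) (ha : 0 < a) (hb : 0 ≤ b) :
    μ[fun ω => (a + b * X ω)⁻¹] ≤
      (a + b * μ[X] / 2)⁻¹ + 4 / a * variance X μ / μ[X] ^ 2 := by
  calc μ[fun ω => (a + b * X ω)⁻¹]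
      ≤ (a + b * (μ[X] / 2))⁻¹ + μ.real {ω | X ω < μ[X] / 2} / a :=
        integral_inv_add_mul_le_add_measureReal_lt hX.aestronglyMeasurable.aemeasurable hX0 ha hb
          (half_pos hm).le
    _ ≤ (a + b * (μ[X] / 2))⁻¹ + 4 * variance X μ / μ[X] ^ 2 / a := by
        gcongr
        exact measureReal_lt_half_integral_le hX hm
    _ = (a + b * μ[X] / 2)⁻¹ + 4 / a * variance X μ / μ[X] ^ 2 := by ring

end

theorem stmt_0_general {Ω : Type*} [MeasurableSpace Ω] (μ : Measure Ω) [IsProbabilityMeasure μ]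
    (M : ℕ) (Y : Fin M → Ω → ℝ)
    (hL2 : ∀ i, MemLp (Y i) 2 μ)
    (hmean : ∀ i, μ[Y i] = 1)
    (hnonneg : ∀ i, ∀ᵐ ω ∂μ, 0 ≤ Y i ω)
    (a b : ℝ) (ha : 0 < a) (hb : 0 < b) :
    μ[fun ω => (a + b * ∑ i, Y i ω)⁻¹] ≤
      (a + b * M / 2)⁻¹ +
        (4 / a) * variance (fun ω => ∑ i, Y i ω) μ / (M : ℝ) ^ 2 := by
  rcases Nat.eq_zero_or_pos M with rfl | hM
  · simp
  have hS : MemLp (fun ω => ∑ i, Y i ω) 2 μ := memLp_finsetSum _ fun i _ => hL2 i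
  have hS0 : ∀ᵐ ω ∂μ, 0 ≤ ∑ i, Y i ω := by
    filter_upwards [ae_all_iff.2 hnonneg] with ω hω
    exact Finset.sum_nonneg fun i _ => hω i
  have hmeanS : ∫ ω, ∑ i, Y i ω ∂μ = M := by
    rw [integral_finsetSum _ fun i _ => (hL2 i).integrable one_le_two]
    simp [hmean]
  have hpos : 0 < ∫ ω, ∑ i, Y i ω ∂μ := by rw [hmeanS]; exact_mod_cast hM
  have h := integral_inv_add_mul_le_inv_add_variance hS hS0 hpos ha hb.le
  rwa [hmeanS] at h

theorem stmt_0 {Ω : Type*} [MeasurableSpace Ω] (μ : Measure Ω) [IsProbabilityMeasure μ]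
    (M : ℕ) (Y : Fin M → Ω → ℝ)
    (hIndep : iIndepFun Y μ)
    (hmeas : ∀ i, Measurable (Y i))
    (hL2 : ∀ i, MemLp (Y i) 2 μ)
    (hmean : ∀ i, μ[Y i] = 1)
    (hnonneg : ∀ i, ∀ᵐ ω ∂μ, 0 ≤ Y i ω)
    (a b : ℝ) (ha : 0 < a) (hb : 0 < b) :
    μ[fun ω => (a + b * ∑ i, Y i ω)⁻¹] ≤
      (a + b * M / 2)⁻¹ +
        (4 / a) * variance (fun ω => ∑ i, Y i ω) μ / (M : ℝ) ^ 2 :=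
  stmt_0_general μ M Y hL2 hmean hnonneg a b ha hb
end

section
/- Let $\pi$ and $\lambda$ be probability measures on a measurable space $(\mathbb{X},\mathcal{X})$ with $\pi \ll \lambda$ and weight function $w = d\pi/d\lambda$ satisfying $w(x) \le L$ for all $x$ and some constant $L \ge 1$. Then the i-SIR Markov kernel $P_N(x,A) = \int \delta_x(dx^1) \sum_{i=1}^N \frac{w(x^i)}{\sum_{j=1}^N w(x^j)} \mathbf{1}_A(x^i) \prod_{j=2}^N \lambda(dx^j)$ satisfies the minorization $P_N(x,A) \ge \epsilon_N \pi(A)$ for all $x$ and measurable $A$, where $\epsilon_N = (N-1)/(2L+N-2)$. -/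
/-!
Let `S = ∑ⱼ w(xʲ)` be the total weight of the `n = N - 1` fresh particles and `S₋ᵢ` the same sum
without particle `i`. As `w x + w(xⁱ) ≤ 2 L`, the selection probability dominates
`∑ᵢ w(xⁱ) 1_A(xⁱ) / (2 L + S₋ᵢ)`; by independence each term has expectation
`π(A) · E[(2 L + S₋ᵢ)⁻¹]`, and Jensen's inequality for `t ↦ t⁻¹` together with `E[w] = 1` bounds
this below by `π(A) / (2 L + n - 1)`.
-/

open MeasureTheory

/-- The i-SIR Markov kernel: the current state `x` is kept as the first particle,
`N - 1` fresh particles are drawn i.i.d. from the proposal `lam`, and one particle is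
selected with probability proportional to its weight. -/
noncomputable def isirP {X : Type*} [MeasurableSpace X] (lam : Measure X) (w : X → ℝ)
    (N : ℕ) (x : X) (A : Set X) : ℝ :=
  ∫ y : Fin (N - 1) → X,
    (w x * A.indicator (fun _ => (1 : ℝ)) x + ∑ i, w (y i) * A.indicator (fun _ => (1 : ℝ)) (y i)) /
      (w x + ∑ i, w (y i)) ∂(Measure.pi fun _ => lam)

theorem inv_integral_le_integral_inv {α : Type*} [MeasurableSpace α] {μ : Measure α}
    [IsProbabilityMeasure μ] {f : α → ℝ} {c : ℝ} (hc : 0 < c) (hcf : ∀ᵐ a ∂μ, c ≤ f a)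
    (hf : Integrable f μ) : (∫ a, f a ∂μ)⁻¹ ≤ ∫ a, (f a)⁻¹ ∂μ := by
  have hconv : ConvexOn ℝ (Set.Ici c) fun t : ℝ => t⁻¹ := by
    simpa using (convexOn_zpow (-1)).subset (Set.Ici_subset_Ioi.2 hc) (convex_Ici c)
  have hcont : ContinuousOn (fun t : ℝ => t⁻¹) (Set.Ici c) :=
    continuousOn_inv₀.mono fun t ht => (hc.trans_le ht).ne'
  have hinv : Integrable (fun a => (f a)⁻¹) μ := by
    refine Integrable.of_mem_Icc 0 c⁻¹ hf.aemeasurable.inv ?_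
    filter_upwards [hcf] with a ha
    exact ⟨inv_nonneg.2 (hc.le.trans ha), inv_anti₀ hc ha⟩
  exact hconv.map_integral_le hcont isClosed_Ici hcf hf hinv

section SuccAbove

variable {X : Type*} [MeasurableSpace X] (μ : Measure X) [SigmaFinite μ] {m : ℕ} (i : Fin (m + 1))

theorem integrable_mul_comp_succAbove {f : X → ℝ} {g : (Fin m → X) → ℝ} (hf : Integrable f μ)
    (hg : Integrable g (Measure.pi fun _ => μ)) :
    Integrable (fun y => f (y i) * g fun j => y (i.succAbove j)) (Measure.pi fun _ => μ) :=
  ((measurePreserving_piFinSuccAbove (fun _ => μ) i).integrable_comp_emb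
    (MeasurableEquiv.measurableEmbedding _)).2 (hf.mul_prod hg)

theorem integral_mul_comp_succAbove (f : X → ℝ) (g : (Fin m → X) → ℝ) :
    ∫ y, f (y i) * g (fun j => y (i.succAbove j)) ∂Measure.pi (fun _ => μ) =
      (∫ t, f t ∂μ) * ∫ z, g z ∂Measure.pi (fun _ => μ) := by
  rw [← integral_prod_mul, ← (measurePreserving_piFinSuccAbove (fun _ => μ) i).integral_comp
    (MeasurableEquiv.measurableEmbedding _)]
  rfl

end SuccAbove

theorem inv_add_le_integral_inv_add_sum {X : Type*} [MeasurableSpace X] (μ : Measure X)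
    [IsProbabilityMeasure μ] {w : X → ℝ} (hw : Integrable w μ) (hw0 : ∀ x, 0 ≤ w x)
    {c : ℝ} (hc : 0 < c) (m : ℕ) :
    (c + m * ∫ t, w t ∂μ)⁻¹ ≤ ∫ z, (c + ∑ j, w (z j))⁻¹ ∂Measure.pi (fun _ : Fin m => μ) := by
  have hsum : Integrable (fun z : Fin m → X => ∑ j, w (z j)) (Measure.pi fun _ => μ) :=
    integrable_finsetSum _ fun j _ => integrable_comp_eval hw
  have hmean : ∫ z, (c + ∑ j, w (z j)) ∂Measure.pi (fun _ : Fin m => μ) = c + m * ∫ t, w t ∂μ := by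
    rw [integral_add (integrable_const c) hsum, integral_finsetSum _ fun j _ =>
      integrable_comp_eval hw]
    have hmarg : ∀ j : Fin m, ∫ z, w (z j) ∂Measure.pi (fun _ => μ) = ∫ t, w t ∂μ :=
      fun j => integral_comp_eval hw.aestronglyMeasurable
    simp [hmarg]
  rw [← hmean]
  exact inv_integral_le_integral_inv hc
    (ae_of_all _ fun z => le_add_of_nonneg_right (Finset.sum_nonneg fun j _ => hw0 _))
    ((integrable_const c).add hsum)

theorem sum_mul_inv_le_div {m : ℕ} {L a₀ b₀ : ℝ} {a b : Fin (m + 1) → ℝ} (ha₀ : 0 ≤ a₀)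
    (hb₀ : 0 ≤ b₀) (hb₀L : b₀ ≤ L) (ha : ∀ i, 0 ≤ a i) (hab : ∀ i, a i ≤ b i)
    (hbL : ∀ i, b i ≤ L) :
    ∑ i, a i * (2 * L + ∑ j, b (i.succAbove j))⁻¹ ≤ (a₀ + ∑ i, a i) / (b₀ + ∑ i, b i) := by
  have hb : ∀ i, 0 ≤ b i := fun i => (ha i).trans (hab i)
  have hD : 0 ≤ b₀ + ∑ i, b i := add_nonneg hb₀ (Finset.sum_nonneg fun i _ => hb i)
  have hterm : ∀ i, a i * (2 * L + ∑ j, b (i.succAbove j))⁻¹ ≤ a i / (b₀ + ∑ i, b i) := by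
    intro i
    have hsplit := Fin.sum_univ_succAbove b i
    have hrest : 0 ≤ ∑ j, b (i.succAbove j) := Finset.sum_nonneg fun j _ => hb _
    rcases hD.eq_or_lt with hD0 | hDpos
    · have : a i = 0 := le_antisymm (by linarith [hab i]) (ha i)
      simp [this]
    · rw [div_eq_mul_inv]
      exact mul_le_mul_of_nonneg_left (inv_anti₀ hDpos (by linarith [hbL i])) (ha i)
  calc ∑ i, a i * (2 * L + ∑ j, b (i.succAbove j))⁻¹
      ≤ ∑ i, a i / (b₀ + ∑ i, b i) := Finset.sum_le_sum fun i _ => hterm i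
    _ = (∑ i, a i) / (b₀ + ∑ i, b i) := (Finset.sum_div _ _ _).symm
    _ ≤ (a₀ + ∑ i, a i) / (b₀ + ∑ i, b i) := by gcongr; exact le_add_of_nonneg_left ha₀

theorem mul_integral_le_isirP {X : Type*} [MeasurableSpace X] (lam : Measure X)
    [IsProbabilityMeasure lam] {w : X → ℝ} (hw : Measurable w) (hw0 : ∀ x, 0 ≤ w x) {L : ℝ}
    (hL : 0 < L) (hwL : ∀ x, w x ≤ L) {A : Set X} (hA : MeasurableSet A) (m : ℕ) (x : X) :
    (m + 1) * ((∫ t, w t * A.indicator (fun _ => (1 : ℝ)) t ∂lam) *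
      ∫ z, (2 * L + ∑ j, w (z j))⁻¹ ∂Measure.pi (fun _ : Fin m => lam)) ≤
      isirP lam w (m + 2) x A := by
  set u : X → ℝ := fun t => w t * A.indicator (fun _ => (1 : ℝ)) t
  set g : (Fin m → X) → ℝ := fun z => (2 * L + ∑ j, w (z j))⁻¹
  have hind : ∀ t, A.indicator (fun _ => (1 : ℝ)) t ∈ Set.Icc 0 1 := fun t => by
    by_cases ht : t ∈ A <;> simp [ht]
  have hu0 : ∀ t, 0 ≤ u t := fun t => mul_nonneg (hw0 t) (hind t).1
  have huw : ∀ t, u t ≤ w t := fun t => mul_le_of_le_one_right (hw0 t) (hind t).2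
  have hu_meas : Measurable u := hw.mul (measurable_const.indicator hA)
  have hu : Integrable u lam := Integrable.of_mem_Icc 0 L hu_meas.aemeasurable
    (ae_of_all _ fun t => ⟨hu0 t, (huw t).trans (hwL t)⟩)
  have hg : Integrable g (Measure.pi fun _ => lam) := by
    refine Integrable.of_mem_Icc 0 (2 * L)⁻¹ (by fun_prop) (ae_of_all _ fun z => ?_)
    have : 0 ≤ ∑ j, w (z j) := Finset.sum_nonneg fun j _ => hw0 _
    exact ⟨by positivity, inv_anti₀ (by positivity) (by linarith)⟩
  set F : (Fin (m + 1) → X) → ℝ := fun y => (u x + ∑ i, u (y i)) / (w x + ∑ i, w (y i))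
  have hisirP : isirP lam w (m + 2) x A = ∫ y, F y ∂Measure.pi (fun _ => lam) := rfl
  have hF : Integrable F (Measure.pi fun _ => lam) := by
    refine Integrable.of_mem_Icc 0 1 ?_ (ae_of_all _ fun y => ⟨?_, ?_⟩)
    · fun_prop
    · exact div_nonneg (add_nonneg (hu0 x) (Finset.sum_nonneg fun i _ => hu0 _))
        (add_nonneg (hw0 x) (Finset.sum_nonneg fun i _ => hw0 _))
    · exact div_le_one_of_le₀ (add_le_add (huw x) (Finset.sum_le_sum fun i _ => huw _))
        (add_nonneg (hw0 x) (Finset.sum_nonneg fun i _ => hw0 _))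
  rw [hisirP]
  calc (m + 1) * ((∫ t, u t ∂lam) * ∫ z, g z ∂Measure.pi (fun _ => lam))
      = ∑ i : Fin (m + 1), ∫ y, u (y i) * g (fun j => y (i.succAbove j))
          ∂Measure.pi (fun _ => lam) := by
        simp [integral_mul_comp_succAbove]
    _ = ∫ y, ∑ i : Fin (m + 1), u (y i) * g (fun j => y (i.succAbove j))
          ∂Measure.pi (fun _ => lam) :=
        (integral_finsetSum _ fun i _ => integrable_mul_comp_succAbove lam i hu hg).symm
    _ ≤ ∫ y, F y ∂Measure.pi (fun _ => lam) :=
        integral_mono (integrable_finsetSum _ fun i _ => integrable_mul_comp_succAbove lam i hu hg)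
          hF fun y => sum_mul_inv_le_div (a := fun i => u (y i)) (b := fun i => w (y i))
            (hu0 x) (hw0 x) (hwL x) (fun i => hu0 _) (fun i => huw _) fun i => hwL _

theorem stmt_3 {X : Type*} [MeasurableSpace X] (lam π : Measure X)
    [IsProbabilityMeasure lam] [IsProbabilityMeasure π]
    (w : X → ℝ) (hw_meas : Measurable w) (hw_nonneg : ∀ x, 0 ≤ w x)
    (L : ℝ) (hL : 1 ≤ L) (hw_bdd : ∀ x, w x ≤ L)
    (hπ : ∀ s : Set X, MeasurableSet s → (π s).toReal = ∫ x in s, w x ∂lam)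
    (N : ℕ) (hN : 2 ≤ N) (x : X) (A : Set X) (hA : MeasurableSet A) :
    ((N : ℝ) - 1) / (2 * L + (N : ℝ) - 2) * (π A).toReal ≤ isirP lam w N x A := by
  obtain ⟨m, rfl⟩ : ∃ m, N = m + 2 := ⟨N - 2, by omega⟩
  have hLpos : 0 < L := zero_lt_one.trans_le hL
  have hw_one : ∫ t, w t ∂lam = 1 := by simpa using (hπ Set.univ MeasurableSet.univ).symm
  have hπA : ∫ t, w t * A.indicator (fun _ => (1 : ℝ)) t ∂lam = (π A).toReal := by
    simp_rw [← Set.indicator_mul_right, mul_one]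
    rw [integral_indicator hA, hπ A hA]
  have hK := inv_add_le_integral_inv_add_sum lam
    (Integrable.of_mem_Icc 0 L hw_meas.aemeasurable (ae_of_all _ fun t => ⟨hw_nonneg t, hw_bdd t⟩))
    hw_nonneg (by positivity : 0 < 2 * L) m
  rw [hw_one, mul_one] at hK
  refine le_trans ?_ (mul_integral_le_isirP lam hw_meas hw_nonneg hLpos hw_bdd hA m x)
  rw [hπA]
  calc ((↑(m + 2) : ℝ) - 1) / (2 * L + ↑(m + 2) - 2) * (π A).toReal
      = (m + 1) * ((π A).toReal * (2 * L + m)⁻¹) := by push_cast; ring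
    _ ≤ _ := by gcongr
end

section
/- Under the assumptions of the i-SIR minorization bound (bounded weights $w \le L$), the i-SIR kernel $P_N$ is uniformly geometrically ergodic: for every $x \in \mathbb{X}$ and $k \in \mathbb{N}$, $\|P_N^k(x,\cdot) - \pi\|_{TV} \le \kappa_N^k$ where $\kappa_N = 1 - (N-1)/(2L+N-2)$. -/
open MeasureTheory ProbabilityTheory

/-- Iterates of a Markov kernel. -/
noncomputable def kpow {X : Type*} [MeasurableSpace X] (P : Kernel X X) : ℕ → Kernel X X
  | 0 => Kernel.id
  | n + 1 => P.comp (kpow P n)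

/-! The whole space is a small set: by the tangent-line bound `1 / D ≥ 2 / c - D / c ^ 2` and
independence of the proposals, the i-SIR kernel satisfies `P x ≥ ε π` with
`ε = (N - 1) / (2 L + N - 2)`, and by exchangeability of the `N` particles it leaves `π`
invariant. Doeblin's argument then contracts `|Pᵏ(x, A) - π(A)|` by the factor
`1 - ε` at each step: writing `P x = (P x - ε π) + ε π`, the `π` part integrates the centred
function `Pᵏ(·, A) - π(A)` to zero, and the rest has mass `1 - ε`. -/

lemma integrable_of_nonneg_of_le {α : Type*} [MeasurableSpace α] {μ : Measure α}
    [IsFiniteMeasure μ] {f : α → ℝ} (hf : AEStronglyMeasurable f μ) {C : ℝ}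
    (h0 : ∀ x, 0 ≤ f x) (hC : ∀ x, f x ≤ C) : Integrable f μ :=
  .of_bound hf C (ae_of_all _ fun x => by rw [Real.norm_of_nonneg (h0 x)]; exact hC x)

section MeasureReal

variable {X : Type*} [MeasurableSpace X]

lemma measureReal_bind_eq_integral (μ : Measure X) (κ : Kernel X X) [IsFiniteKernel κ]
    {A : Set X} (hA : MeasurableSet A) :
    (μ.bind κ).real A = ∫ y, (κ y A).toReal ∂μ := by
  rw [measureReal_def, Measure.bind_apply hA κ.aemeasurable,
    integral_toReal (κ.measurable_coe hA).aemeasurable (ae_of_all _ fun _ => measure_lt_top _ _)]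

lemma ProbabilityTheory.Kernel.Invariant.of_integral_measureReal {κ : Kernel X X}
    [IsFiniteKernel κ] {π : Measure X} [IsFiniteMeasure π]
    (h : ∀ A, MeasurableSet A → ∫ y, (κ y A).toReal ∂π = (π A).toReal) : κ.Invariant π := by
  ext A hA
  rw [← ENNReal.toReal_eq_toReal_iff' (measure_ne_top _ _) (measure_ne_top _ _), ← h A hA,
    ← measureReal_bind_eq_integral _ _ hA, measureReal_def]

lemma ofReal_smul_le_of_mul_measureReal_le {μ ν : Measure X} [IsFiniteMeasure μ]
    [IsFiniteMeasure ν] {ε : ℝ} (hε : 0 ≤ ε)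
    (h : ∀ A, MeasurableSet A → ε * (ν A).toReal ≤ (μ A).toReal) : ENNReal.ofReal ε • ν ≤ μ := by
  refine Measure.le_iff.2 fun A hA => ?_
  rw [Measure.smul_apply, smul_eq_mul, ← ENNReal.ofReal_toReal (measure_ne_top ν A),
    ← ENNReal.ofReal_mul hε, ← ENNReal.ofReal_toReal (measure_ne_top μ A)]
  exact ENNReal.ofReal_le_ofReal (h A hA)

lemma integral_eq_integral_mul_of_measureReal_eq {μ ν : Measure X} [IsFiniteMeasure ν]
    {w : X → ℝ} (hw : Measurable w) (hw0 : ∀ x, 0 ≤ w x) (hwi : Integrable w μ)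
    (hν : ∀ A, MeasurableSet A → (ν A).toReal = ∫ x in A, w x ∂μ) (f : X → ℝ) :
    ∫ x, f x ∂ν = ∫ x, w x * f x ∂μ := by
  have hν' : ν = μ.withDensity fun x => ENNReal.ofReal (w x) := by
    ext A hA
    rw [withDensity_apply _ hA, ← ofReal_integral_eq_lintegral_ofReal hwi.restrict
      (ae_of_all _ hw0), ← hν A hA, ENNReal.ofReal_toReal (measure_ne_top ν A)]
  rw [hν', integral_withDensity_eq_integral_toReal_smul (by fun_prop)
    (ae_of_all _ fun _ => ENNReal.ofReal_lt_top)]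
  simp_rw [ENNReal.toReal_ofReal (hw0 _), smul_eq_mul]

end MeasureReal

section Doeblin

variable {X : Type*} [MeasurableSpace X]

instance isMarkovKernel_kpow (P : Kernel X X) [IsMarkovKernel P] (k : ℕ) :
    IsMarkovKernel (kpow P k) := by
  induction k with
  | zero => rw [kpow]; infer_instance
  | succ k ih => rw [kpow]; infer_instance

lemma kpow_succ (P : Kernel X X) (k : ℕ) : kpow P (k + 1) = kpow P k ∘ₖ P := by
  induction k with
  | zero => simp only [kpow, Kernel.comp_id, Kernel.id_comp]
  | succ k ih =>
    change P ∘ₖ kpow P (k + 1) = (P ∘ₖ kpow P k) ∘ₖ P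
    rw [ih, Kernel.comp_assoc]

lemma ProbabilityTheory.Kernel.Invariant.kpow {P : Kernel X X} {π : Measure X}
    (hP : P.Invariant π) (k : ℕ) : (kpow P k).Invariant π := by
  induction k with
  | zero => exact Measure.id_comp
  | succ k ih => exact hP.comp ih

lemma abs_integral_le_of_smul_le {μ π : Measure X} [IsProbabilityMeasure μ]
    [IsProbabilityMeasure π] {ε : ℝ} (hε : 0 ≤ ε) (hle : ENNReal.ofReal ε • π ≤ μ)
    {f : X → ℝ} (hf : Measurable f) {δ : ℝ} (hfδ : ∀ x, |f x| ≤ δ) (hπf : ∫ x, f x ∂π = 0) :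
    |∫ x, f x ∂μ| ≤ (1 - ε) * δ := by
  have : IsFiniteMeasure (ENNReal.ofReal ε • π) := isFiniteMeasure_of_le μ hle
  have hfδ' : ∀ x, ‖f x‖ ≤ δ := hfδ
  set ρ := μ - ENNReal.ofReal ε • π
  have hμ : μ = ρ + ENNReal.ofReal ε • π := (Measure.sub_add_cancel_of_le hle).symm
  have : IsFiniteMeasure ρ := isFiniteMeasure_of_le μ Measure.sub_le
  have hρ : ρ.real Set.univ = 1 - ε := by
    have h := congrArg (fun ν : Measure X => ν.real Set.univ) hμ
    rw [probReal_univ, measureReal_add_apply, measureReal_ennreal_smul_apply,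
      probReal_univ (μ := π), ENNReal.toReal_ofReal hε] at h
    linarith
  have hint : ∀ ν : Measure X, [IsFiniteMeasure ν] → Integrable f ν := fun ν _ =>
    .of_bound hf.aestronglyMeasurable δ (ae_of_all _ hfδ')
  rw [hμ, integral_add_measure (hint _) (hint _), integral_smul_measure, hπf, smul_zero,
    add_zero, ← hρ, mul_comm]
  exact norm_integral_le_of_norm_le_const (ae_of_all _ hfδ')

theorem abs_kpow_sub_le_of_smul_le {P : Kernel X X} [IsMarkovKernel P] {π : Measure X}
    [IsProbabilityMeasure π] (hP : P.Invariant π) {ε : ℝ} (hε : 0 ≤ ε)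
    (hle : ∀ x, ENNReal.ofReal ε • π ≤ P x) {A : Set X} (hA : MeasurableSet A) (k : ℕ) (x : X) :
    |(kpow P k x A).toReal - (π A).toReal| ≤ (1 - ε) ^ k := by
  induction k generalizing x with
  | zero =>
    rw [pow_zero]
    exact abs_sub_le_of_nonneg_of_le ENNReal.toReal_nonneg measureReal_le_one
      ENNReal.toReal_nonneg measureReal_le_one
  | succ k ih =>
    set f : X → ℝ := fun y => (kpow P k y A).toReal - (π A).toReal
    have hf : Measurable f := ((kpow P k).measurable_coe hA).ennreal_toReal.sub_const _
    have hf_integral : ∀ ν : Measure X, [IsProbabilityMeasure ν] →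
        ∫ y, f y ∂ν = (ν.bind (kpow P k)).real A - (π A).toReal := fun ν _ => by
      rw [measureReal_bind_eq_integral _ _ hA, integral_sub _ (integrable_const _),
        integral_const, probReal_univ, one_smul]
      exact integrable_of_nonneg_of_le
        ((kpow P k).measurable_coe hA).ennreal_toReal.aestronglyMeasurable
        (fun _ => ENNReal.toReal_nonneg) fun _ => measureReal_le_one
    have hx : (kpow P (k + 1) x A).toReal - (π A).toReal = ∫ y, f y ∂(P x) := by
      rw [hf_integral, kpow_succ, Kernel.comp_apply, measureReal_def]
    have hπ : ∫ y, f y ∂π = 0 := by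
      rw [hf_integral, (hP.kpow k).def, measureReal_def, sub_self]
    rw [hx, pow_succ, mul_comm]
    exact abs_integral_le_of_smul_le hε (hle x) hf ih hπ

end Doeblin

section ProductMeasure

variable {X : Type*} [MeasurableSpace X] (lam : Measure X)

lemma integral_prod_pi_eq_integral_pi_succ [SigmaFinite lam] (n : ℕ)
    (G : X × (Fin n → X) → ℝ) :
    ∫ q, G q ∂lam.prod (Measure.pi fun _ => lam)
      = ∫ u, G (u 0, Fin.tail u) ∂Measure.pi (fun _ => lam) := by
  rw [← (measurePreserving_piFinSuccAbove (fun _ => lam) 0).integral_comp']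
  rfl

variable [IsProbabilityMeasure lam] {ι : Type*} [Fintype ι]

lemma integral_pi_comp_perm [DecidableEq ι] (F : (ι → X) → ℝ) (σ : Equiv.Perm ι) :
    ∫ u, F (u ∘ σ) ∂Measure.pi (fun _ => lam) = ∫ u, F u ∂Measure.pi (fun _ => lam) := by
  have h (u : ι → X) : MeasurableEquiv.piCongrLeft (fun _ => X) σ.symm u = u ∘ σ := by
    ext k
    simpa [MeasurableEquiv.coe_piCongrLeft] using
      Equiv.piCongrLeft_apply_apply (P := fun _ => X) σ.symm u (σ k)
  simpa only [h] using (measurePreserving_piCongrLeft (fun _ => lam) σ.symm).integral_comp' F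

lemma integral_pi_comp_eval_mul_comp_eval {i j : ι} (hij : i ≠ j) {f g : X → ℝ}
    (hf : Measurable f) (hg : Measurable g) :
    ∫ y, f (y i) * g (y j) ∂Measure.pi (fun _ => lam) = (∫ x, f x ∂lam) * ∫ x, g x ∂lam := by
  have hind : IndepFun (fun y : ι → X => f (y i)) (fun y => g (y j)) (Measure.pi fun _ => lam) :=
    ((iIndepFun_pi (X := fun _ => id) fun _ => aemeasurable_id).indepFun hij).comp hf hg
  rw [hind.integral_fun_mul_eq_mul_integral
    (hf.comp (measurable_pi_apply i)).aestronglyMeasurable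
    (hg.comp (measurable_pi_apply j)).aestronglyMeasurable,
    integral_comp_eval hf.aestronglyMeasurable, integral_comp_eval hg.aestronglyMeasurable]

lemma integral_pi_sum_comp_eval {f : X → ℝ} (hf : Integrable f lam) :
    ∫ y : ι → X, ∑ i, f (y i) ∂Measure.pi (fun _ => lam) = Fintype.card ι * ∫ x, f x ∂lam := by
  rw [integral_finsetSum _ fun i _ => integrable_comp_eval hf]
  simp [integral_comp_eval (μ := fun _ => lam) hf.aestronglyMeasurable]

end ProductMeasure

lemma two_mul_div_sub_mul_div_sq_le_div {s D c : ℝ} (hc : 0 < c) (hs : 0 ≤ s) (hsD : s ≤ D) :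
    2 * s / c - s * D / c ^ 2 ≤ s / D := by
  rcases (hs.trans hsD).eq_or_lt with hD | hD
  · simp [le_antisymm (hsD.trans hD.ge) hs]
  · rw [div_sub_div _ _ hc.ne' (by positivity), div_le_div_iff₀ (by positivity) hD]
    nlinarith [mul_nonneg hs (sq_nonneg (c - D))]

lemma integrable_div_of_nonneg_of_le {α : Type*} [MeasurableSpace α] {μ : Measure α}
    [IsFiniteMeasure μ] {T D : α → ℝ} (hT : Measurable T) (hD : Measurable D)
    (hT0 : ∀ x, 0 ≤ T x) (hTD : ∀ x, T x ≤ D x) : Integrable (fun x => T x / D x) μ :=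
  integrable_of_nonneg_of_le (hT.div hD).aestronglyMeasurable
    (fun x => div_nonneg (hT0 x) ((hT0 x).trans (hTD x)))
    fun x => div_le_one_of_le₀ (hTD x) ((hT0 x).trans (hTD x))

lemma div_le_integral_div_of_integral_mul_le {α : Type*} [MeasurableSpace α] {μ : Measure α}
    [IsFiniteMeasure μ] {T D : α → ℝ} (hT : Measurable T) (hD : Measurable D)
    (hT0 : ∀ x, 0 ≤ T x) (hTD : ∀ x, T x ≤ D x) (hTi : Integrable T μ)
    (hTDi : Integrable (fun x => T x * D x) μ) {c : ℝ} (hc : 0 < c)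
    (hTDc : ∫ x, T x * D x ∂μ ≤ c * ∫ x, T x ∂μ) :
    (∫ x, T x ∂μ) / c ≤ ∫ x, T x / D x ∂μ :=
  calc (∫ x, T x ∂μ) / c = 2 * (∫ x, T x ∂μ) / c - c * (∫ x, T x ∂μ) / c ^ 2 := by
        field_simp; ring
    _ ≤ 2 * (∫ x, T x ∂μ) / c - (∫ x, T x * D x ∂μ) / c ^ 2 := by gcongr
    _ = ∫ x, (2 * T x / c - T x * D x / c ^ 2) ∂μ := by
        rw [integral_sub ((hTi.const_mul 2).div_const c) (hTDi.div_const _), integral_div,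
          integral_div, integral_const_mul]
    _ ≤ ∫ x, T x / D x ∂μ :=
        integral_mono (((hTi.const_mul 2).div_const c).sub (hTDi.div_const _))
          (integrable_div_of_nonneg_of_le hT hD hT0 hTD)
          fun x => two_mul_div_sub_mul_div_sq_le_div hc (hT0 x) (hTD x)

section WeightedResampling

variable {X : Type*} [MeasurableSpace X] (lam : Measure X) [IsProbabilityMeasure lam]
  {ι : Type*} [Fintype ι] {w g : X → ℝ} {L : ℝ}

lemma integral_comp_eval_mul_sum_le (hw : Measurable w) (hg : Measurable g)
    (hg0 : ∀ x, 0 ≤ g x) (hgw : ∀ x, g x ≤ w x) (hwL : ∀ x, w x ≤ L) (hw1 : ∫ x, w x ∂lam = 1)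
    (i : ι) :
    ∫ y, g (y i) * ∑ j, w (y j) ∂Measure.pi (fun _ => lam)
      ≤ (L + (Fintype.card ι - 1)) * ∫ x, g x ∂lam := by
  classical
  have hw0 (x : X) : 0 ≤ w x := (hg0 x).trans (hgw x)
  have hgwL (x x' : X) : g x * w x' ≤ L * L :=
    mul_le_mul ((hgw x).trans (hwL x)) (hwL x') (hw0 x') ((hw0 x').trans (hwL x'))
  -- Off the diagonal the coordinates are independent and `∫ w = 1`; on it, `w ≤ L`.
  have hterm (j : ι) : ∫ y, g (y i) * w (y j) ∂Measure.pi (fun _ => lam)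
      ≤ (if j = i then L else 1) * ∫ x, g x ∂lam := by
    split_ifs with hji
    · subst hji
      rw [integral_comp_eval (μ := fun _ => lam) (f := fun x => g x * w x) (by fun_prop),
        ← integral_const_mul]
      refine integral_mono (integrable_of_nonneg_of_le (by fun_prop)
        (fun x => mul_nonneg (hg0 x) (hw0 x)) fun x => hgwL x x) ?_ fun x => ?_
      · exact (integrable_of_nonneg_of_le hg.aestronglyMeasurable hg0
          fun x => (hgw x).trans (hwL x)).const_mul L
      · rw [mul_comm L]
        exact mul_le_mul_of_nonneg_left (hwL x) (hg0 x)
    · rw [integral_pi_comp_eval_mul_comp_eval lam (Ne.symm hji) hg hw, hw1, one_mul, mul_one]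
  calc ∫ y, g (y i) * ∑ j, w (y j) ∂Measure.pi (fun _ => lam)
      = ∑ j, ∫ y, g (y i) * w (y j) ∂Measure.pi (fun _ => lam) := by
        simp_rw [Finset.mul_sum]
        refine integral_finsetSum _ fun j _ => integrable_of_nonneg_of_le (by fun_prop)
          (fun y => mul_nonneg (hg0 _) (hw0 _)) fun y => hgwL _ _
    _ ≤ ∑ j, (if j = i then L else 1) * ∫ x, g x ∂lam := Finset.sum_le_sum fun j _ => hterm j
    _ = (L + (Fintype.card ι - 1)) * ∫ x, g x ∂lam := by
        rw [← Finset.sum_mul, ← Finset.add_sum_erase _ _ (Finset.mem_univ i), if_pos rfl,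
          Finset.sum_congr rfl fun j hj => if_neg (Finset.ne_of_mem_erase hj)]
        simp [Finset.card_erase_of_mem, Nat.cast_sub (Fintype.card_pos_iff.2 ⟨i⟩)]

lemma integral_sum_mul_add_sum_le (hw : Measurable w) (hg : Measurable g)
    (hg0 : ∀ x, 0 ≤ g x) (hgw : ∀ x, g x ≤ w x) (hwL : ∀ x, w x ≤ L) (hw1 : ∫ x, w x ∂lam = 1)
    (a : ℝ) :
    ∫ y : ι → X, (∑ i, g (y i)) * (a + ∑ j, w (y j)) ∂Measure.pi (fun _ => lam)
      ≤ Fintype.card ι * (a + L + (Fintype.card ι - 1)) * ∫ x, g x ∂lam := by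
  have hw0 (x : X) : 0 ≤ w x := (hg0 x).trans (hgw x)
  have hS (y : ι → X) : ∑ j, w (y j) ≤ Fintype.card ι * L := by
    simpa using Finset.sum_le_card_nsmul Finset.univ _ L fun j _ => hwL (y j)
  have hgi : Integrable g lam :=
    integrable_of_nonneg_of_le hg.aestronglyMeasurable hg0 fun x => (hgw x).trans (hwL x)
  have hgSi (i : ι) : Integrable (fun y => g (y i) * ∑ j, w (y j)) (Measure.pi fun _ => lam) :=
    integrable_of_nonneg_of_le (by fun_prop)
      (fun y => mul_nonneg (hg0 _) (Finset.sum_nonneg fun j _ => hw0 _))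
      fun y => mul_le_mul ((hgw _).trans (hwL _)) (hS y)
        (Finset.sum_nonneg fun j _ => hw0 _) ((hw0 (y i)).trans (hwL _))
  calc ∫ y : ι → X, (∑ i, g (y i)) * (a + ∑ j, w (y j)) ∂Measure.pi (fun _ => lam)
      = ∑ i : ι, ∫ y : ι → X, (a * g (y i) + g (y i) * ∑ j, w (y j))
          ∂Measure.pi (fun _ => lam) := by
        refine (integral_congr_ae (ae_of_all _ fun y => ?_)).trans
          (integral_finsetSum _ fun i _ => ((integrable_comp_eval hgi).const_mul a).add (hgSi i))
        simp only [Finset.sum_mul]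
        exact Finset.sum_congr rfl fun i _ => by ring
    _ = ∑ i : ι, (a * ∫ x, g x ∂lam
          + ∫ y : ι → X, g (y i) * ∑ j, w (y j) ∂Measure.pi (fun _ => lam)) := by
        refine Finset.sum_congr rfl fun i _ => ?_
        rw [integral_add ((integrable_comp_eval hgi).const_mul a) (hgSi i), integral_const_mul,
          integral_comp_eval (μ := fun _ => lam) hg.aestronglyMeasurable]
    _ ≤ ∑ _i : ι, (a * ∫ x, g x ∂lam + (L + (Fintype.card ι - 1)) * ∫ x, g x ∂lam) := by
        gcongr with i
        exact integral_comp_eval_mul_sum_le lam hw hg hg0 hgw hwL hw1 i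
    _ = Fintype.card ι * (a + L + (Fintype.card ι - 1)) * ∫ x, g x ∂lam := by
        simp only [Finset.sum_const, Finset.card_univ, nsmul_eq_mul]
        ring

lemma card_div_mul_integral_le_integral_div (hw : Measurable w) (hg : Measurable g)
    (hg0 : ∀ x, 0 ≤ g x) (hgw : ∀ x, g x ≤ w x) (hwL : ∀ x, w x ≤ L) (hw1 : ∫ x, w x ∂lam = 1)
    (hL : 1 ≤ L) {a b : ℝ} (hb : 0 ≤ b) (hba : b ≤ a) (haL : a ≤ L) :
    Fintype.card ι / (2 * L + Fintype.card ι - 1) * ∫ x, g x ∂lam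
      ≤ ∫ y : ι → X, (b + ∑ i, g (y i)) / (a + ∑ i, w (y i)) ∂Measure.pi (fun _ => lam) := by
  set n : ℝ := (Fintype.card ι : ℝ)
  set T : (ι → X) → ℝ := fun y => ∑ i, g (y i)
  set D : (ι → X) → ℝ := fun y => a + ∑ i, w (y i)
  have hn : 0 ≤ n := Nat.cast_nonneg _
  have hc : 0 < 2 * L + n - 1 := by linarith
  have hw0 (x : X) : 0 ≤ w x := (hg0 x).trans (hgw x)
  have hT0 (y : ι → X) : 0 ≤ T y := Finset.sum_nonneg fun i _ => hg0 _
  have hbTD (y : ι → X) : b + T y ≤ D y := add_le_add hba (Finset.sum_le_sum fun i _ => hgw _)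
  have hTD (y : ι → X) : T y ≤ D y := (le_add_of_nonneg_left hb).trans (hbTD y)
  have hDL (y : ι → X) : D y ≤ L + n * L := by
    refine add_le_add haL ?_
    simpa using Finset.sum_le_card_nsmul Finset.univ _ L fun j _ => hwL (y j)
  have hgi : Integrable g lam :=
    integrable_of_nonneg_of_le hg.aestronglyMeasurable hg0 fun x => (hgw x).trans (hwL x)
  have hTD_le : ∫ y, T y * D y ∂Measure.pi (fun _ => lam)
      ≤ (2 * L + n - 1) * ∫ y, T y ∂Measure.pi (fun _ => lam) := by
    rw [integral_pi_sum_comp_eval lam hgi]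
    refine (integral_sum_mul_add_sum_le lam hw hg hg0 hgw hwL hw1 a).trans ?_
    nlinarith [mul_nonneg hn (integral_nonneg hg0 : 0 ≤ ∫ x, g x ∂lam)]
  calc n / (2 * L + n - 1) * ∫ x, g x ∂lam
      = (∫ y, T y ∂Measure.pi (fun _ => lam)) / (2 * L + n - 1) := by
        rw [integral_pi_sum_comp_eval lam hgi]; ring
    _ ≤ ∫ y, T y / D y ∂Measure.pi (fun _ => lam) :=
        div_le_integral_div_of_integral_mul_le (by fun_prop) (by fun_prop) hT0 hTD
          (integrable_finsetSum _ fun i _ => integrable_comp_eval hgi)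
          (integrable_of_nonneg_of_le (by fun_prop)
            (fun y => mul_nonneg (hT0 y) ((hT0 y).trans (hTD y))) fun y =>
              mul_le_mul ((hTD y).trans (hDL y)) (hDL y) ((hT0 y).trans (hTD y)) (by positivity))
          hc hTD_le
    _ ≤ ∫ y, (b + T y) / D y ∂Measure.pi (fun _ => lam) := by
        refine integral_mono (integrable_div_of_nonneg_of_le (by fun_prop) (by fun_prop) hT0 hTD)
          (integrable_div_of_nonneg_of_le (by fun_prop) (by fun_prop)
            (fun y => add_nonneg hb (hT0 y)) hbTD) fun y => ?_
        exact div_le_div_of_nonneg_right (le_add_of_nonneg_left hb) ((hT0 y).trans (hTD y))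

lemma integral_pi_mul_div_sum_comm [DecidableEq ι] (w g : X → ℝ) (i j : ι) :
    ∫ u, w (u i) * g (u j) / ∑ k, w (u k) ∂Measure.pi (fun _ => lam)
      = ∫ u, w (u j) * g (u i) / ∑ k, w (u k) ∂Measure.pi (fun _ => lam) := by
  rw [← integral_pi_comp_perm lam _ (Equiv.swap i j)]
  congr 1
  ext u
  simp only [Function.comp_apply, Equiv.swap_apply_left, Equiv.swap_apply_right,
    Equiv.sum_comp (Equiv.swap i j) fun k => w (u k)]

lemma integral_pi_mul_sum_div_sum (hw : Measurable w) (hg : Measurable g) (hg0 : ∀ x, 0 ≤ g x)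
    (hgw : ∀ x, g x ≤ w x) (hwL : ∀ x, w x ≤ L) (i : ι) :
    ∫ u, w (u i) * ((∑ j, g (u j)) / ∑ j, w (u j)) ∂Measure.pi (fun _ => lam)
      = ∫ x, g x ∂lam := by
  classical
  have hw0 (x : X) : 0 ≤ w x := (hg0 x).trans (hgw x)
  have hle_sum (u : ι → X) (k : ι) : w (u k) ≤ ∑ j, w (u j) :=
    Finset.single_le_sum (fun j _ => hw0 (u j)) (Finset.mem_univ k)
  have hint (a b : ι) :
      Integrable (fun u => w (u a) * g (u b) / ∑ k, w (u k)) (Measure.pi fun _ => lam) := by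
    refine integrable_of_nonneg_of_le (Measurable.aestronglyMeasurable (by fun_prop)) (C := L)
      (fun u => div_nonneg (mul_nonneg (hw0 _) (hg0 _)) (Finset.sum_nonneg fun k _ => hw0 _))
      fun u => ?_
    rw [mul_div_assoc]
    have hS0 : 0 ≤ ∑ k, w (u k) := Finset.sum_nonneg fun k _ => hw0 _
    exact (mul_le_of_le_one_right (hw0 _)
      (div_le_one_of_le₀ ((hgw _).trans (hle_sum u b)) hS0)).trans (hwL _)
  calc ∫ u, w (u i) * ((∑ j, g (u j)) / ∑ j, w (u j)) ∂Measure.pi (fun _ => lam)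
      = ∑ j, ∫ u, w (u i) * g (u j) / ∑ k, w (u k) ∂Measure.pi (fun _ => lam) := by
        rw [← integral_finsetSum _ fun j _ => hint i j]
        simp only [Finset.sum_div, Finset.mul_sum, mul_div_assoc]
    _ = ∑ j, ∫ u, w (u j) * g (u i) / ∑ k, w (u k) ∂Measure.pi (fun _ => lam) := by
        simp_rw [integral_pi_mul_div_sum_comm lam w g i]
    _ = ∫ u, g (u i) ∂Measure.pi (fun _ => lam) := by
        rw [← integral_finsetSum _ fun j _ => hint j i]
        congr 1
        ext u
        rw [← Finset.sum_div, ← Finset.sum_mul]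
        rcases (Finset.sum_nonneg fun k _ => hw0 (u k)).eq_or_lt with hS | hS
        · simp [le_antisymm ((hgw _).trans ((hle_sum u i).trans hS.ge)) (hg0 _)]
        · field_simp
    _ = ∫ x, g x ∂lam := integral_comp_eval (μ := fun _ => lam) hg.aestronglyMeasurable

end WeightedResampling

section ISIR

variable {X : Type*} [MeasurableSpace X] (lam : Measure X) {w : X → ℝ} {L : ℝ}

lemma isirP_eq (N : ℕ) (x : X) (A : Set X) :
    isirP lam w N x A = ∫ y : Fin (N - 1) → X,
      (A.indicator w x + ∑ i, A.indicator w (y i)) / (w x + ∑ i, w (y i))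
        ∂Measure.pi fun _ => lam := by
  simp only [isirP, ← Set.indicator_mul_right, mul_one]

variable [IsProbabilityMeasure lam]

lemma card_div_mul_setIntegral_le_isirP (hw : Measurable w) (hw0 : ∀ x, 0 ≤ w x)
    (hwL : ∀ x, w x ≤ L) (hw1 : ∫ x, w x ∂lam = 1) (hL : 1 ≤ L) {A : Set X}
    (hA : MeasurableSet A) (n : ℕ) (x : X) :
    n / (2 * L + n - 1) * ∫ x in A, w x ∂lam ≤ isirP lam w (n + 1) x A := by
  have hg0 : ∀ x, 0 ≤ A.indicator w x := Set.indicator_nonneg fun x _ => hw0 x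
  have hgw : ∀ x, A.indicator w x ≤ w x := Set.indicator_le_self' fun x _ => hw0 x
  simpa [isirP_eq, integral_indicator hA] using
    card_div_mul_integral_le_integral_div (ι := Fin n) lam hw (hw.indicator hA) hg0 hgw hwL hw1
      hL (hg0 x) (hgw x) (hwL x)

lemma integral_mul_isirP (hw : Measurable w) (hw0 : ∀ x, 0 ≤ w x) (hwL : ∀ x, w x ≤ L)
    {A : Set X} (hA : MeasurableSet A) (n : ℕ) :
    ∫ x, w x * isirP lam w (n + 1) x A ∂lam = ∫ x in A, w x ∂lam := by
  set g := A.indicator w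
  have hg : Measurable g := hw.indicator hA
  have hg0 : ∀ x, 0 ≤ g x := Set.indicator_nonneg fun x _ => hw0 x
  have hgw : ∀ x, g x ≤ w x := Set.indicator_le_self' fun x _ => hw0 x
  set G : X × (Fin n → X) → ℝ :=
    fun q => w q.1 * ((g q.1 + ∑ i, g (q.2 i)) / (w q.1 + ∑ i, w (q.2 i)))
  have hGi : Integrable G (lam.prod (Measure.pi fun _ => lam)) := by
    have hden (q : X × (Fin n → X)) : 0 ≤ w q.1 + ∑ i, w (q.2 i) :=
      add_nonneg (hw0 _) (Finset.sum_nonneg fun i _ => hw0 _)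
    have hnum (q : X × (Fin n → X)) : 0 ≤ g q.1 + ∑ i, g (q.2 i) :=
      add_nonneg (hg0 _) (Finset.sum_nonneg fun i _ => hg0 _)
    refine integrable_of_nonneg_of_le (Measurable.aestronglyMeasurable (by fun_prop))
      (fun q => mul_nonneg (hw0 _) (div_nonneg (hnum q) (hden q))) (C := L) fun q => ?_
    have hle : g q.1 + ∑ i, g (q.2 i) ≤ w q.1 + ∑ i, w (q.2 i) :=
      add_le_add (hgw _) (Finset.sum_le_sum fun i _ => hgw _)
    exact (mul_le_of_le_one_right (hw0 _) (div_le_one_of_le₀ hle (hden q))).trans (hwL _)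
  calc ∫ x, w x * isirP lam w (n + 1) x A ∂lam
      = ∫ x, ∫ y, G (x, y) ∂Measure.pi (fun _ => lam) ∂lam := by
        simp_rw [isirP_eq, ← integral_const_mul]; rfl
    _ = ∫ u, G (u 0, Fin.tail u) ∂Measure.pi (fun _ => lam) := by
        rw [← integral_prod G hGi, integral_prod_pi_eq_integral_pi_succ]
    _ = ∫ u : Fin (n + 1) → X, w (u 0) * ((∑ j, g (u j)) / ∑ j, w (u j))
          ∂Measure.pi (fun _ => lam) := by
        simp only [G, Fin.sum_univ_succ, Fin.tail]
    _ = ∫ x in A, w x ∂lam := by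
        rw [integral_pi_mul_sum_div_sum lam hw hg hg0 hgw hwL, integral_indicator hA]

end ISIR

/-- Uniform geometric ergodicity of the i-SIR kernel under bounded weights. -/
theorem stmt_4 {X : Type*} [MeasurableSpace X] (lam π : Measure X)
    [IsProbabilityMeasure lam] [IsProbabilityMeasure π]
    (w : X → ℝ) (hw_meas : Measurable w) (hw_nonneg : ∀ x, 0 ≤ w x)
    (L : ℝ) (hL : 1 ≤ L) (hw_bdd : ∀ x, w x ≤ L)
    (hπ : ∀ s : Set X, MeasurableSet s → (π s).toReal = ∫ x in s, w x ∂lam)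
    (N : ℕ) (hN : 2 ≤ N)
    (P : Kernel X X) [IsMarkovKernel P]
    (hP : ∀ x, ∀ A : Set X, MeasurableSet A → (P x A).toReal = isirP lam w N x A) :
    ∀ k : ℕ, ∀ x : X, ∀ A : Set X, MeasurableSet A →
      |(kpow P k x A).toReal - (π A).toReal| ≤
        (1 - ((N : ℝ) - 1) / (2 * L + (N : ℝ) - 2)) ^ k := by
  obtain ⟨n, rfl⟩ : ∃ n, N = n + 1 := ⟨N - 1, by omega⟩
  have hwi : Integrable w lam :=
    integrable_of_nonneg_of_le hw_meas.aestronglyMeasurable hw_nonneg hw_bdd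
  have hw1 : ∫ x, w x ∂lam = 1 := by simpa using (hπ Set.univ MeasurableSet.univ).symm
  have hinv : P.Invariant π := Kernel.Invariant.of_integral_measureReal fun A hA => by
    rw [integral_eq_integral_mul_of_measureReal_eq hw_meas hw_nonneg hwi hπ, hπ A hA]
    simp_rw [hP _ A hA]
    exact integral_mul_isirP lam hw_meas hw_nonneg hw_bdd hA n
  have hε : 0 ≤ (n : ℝ) / (2 * L + n - 1) := div_nonneg n.cast_nonneg (by linarith)
  have hmin : ∀ x, ENNReal.ofReal (n / (2 * L + n - 1)) • π ≤ P x := fun x =>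
    ofReal_smul_le_of_mul_measureReal_le hε fun A hA => by
      rw [hP x A hA, hπ A hA]
      exact card_div_mul_setIntegral_le_isirP lam hw_meas hw_nonneg hw_bdd hw1 hL hA n x
  intro k x A hA
  convert abs_kpow_sub_le_of_smul_le hinv hε hmin hA k x using 3
  push_cast
  ring
end

section
/- Let $K \subset \mathbb{X}$ with $w_{\infty,K} := \sup_{x \in K} w(x)/\lambda(w) < \infty$ and $\pi(K) > 0$. Then for every $x \in K$ and measurable $A$, the i-SIR kernel satisfies $P_N(x,A) \ge \epsilon_{N,K}\,\pi_K(A)$, where $\epsilon_{N,K} = (N-1)\pi(K)/(2 w_{\infty,K} + N - 2)$ and $\pi_K(A) = \pi(A \cap K)/\pi(K)$. -/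
open MeasureTheory

open ProbabilityTheory Finset

theorem two_div_sub_div_sq_le_inv {t : ℝ} (ht : 0 < t) (m : ℝ) : 2 / m - t / m ^ 2 ≤ t⁻¹ := by
  rcases eq_or_ne m 0 with rfl | hm
  · simpa using ht.le
  · have hgap : t⁻¹ - (2 / m - t / m ^ 2) = (t - m) ^ 2 / (t * m ^ 2) := by
      field_simp
      ring
    have : 0 ≤ (t - m) ^ 2 / (t * m ^ 2) := by positivity
    linarith

theorem mul_two_div_sub_div_sq_le_div {p D t : ℝ} (hp : 0 ≤ p) (hpD : p ≤ D) (hDt : D ≤ t)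
    (m : ℝ) : p * (2 / m - t / m ^ 2) ≤ p / D := by
  rcases hp.eq_or_lt with rfl | hp
  · simp
  have hD : 0 < D := hp.trans_le hpD
  calc p * (2 / m - t / m ^ 2) ≤ p * t⁻¹ :=
        mul_le_mul_of_nonneg_left (two_div_sub_div_sq_le_inv (hD.trans_le hDt) m) hp.le
    _ ≤ p * D⁻¹ := mul_le_mul_of_nonneg_left (inv_anti₀ hD hDt) hp.le
    _ = p / D := (div_eq_mul_inv p D).symm

theorem two_div_sub_self_div_sq (m : ℝ) : 2 / m - m / m ^ 2 = m⁻¹ := by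
  rcases eq_or_ne m 0 with rfl | hm
  · simp
  · field_simp
    ring

section TangentMinorant

variable {X ι : Type*} [Fintype ι] [DecidableEq ι]

/-- `2 / m - t / m ^ 2` is the tangent of `t ↦ t⁻¹` at `m`, evaluated at
`t = a + ∑_{j ≠ i} g (y j)`. -/
noncomputable def tangentMinorant (f g : X → ℝ) (a m : ℝ) (y : ι → X) : ℝ :=
  ∑ i, f (y i) * (2 / m - (a + ∑ j ∈ univ.erase i, g (y j)) / m ^ 2)

theorem tangentMinorant_eq (f g : X → ℝ) (a m : ℝ) (y : ι → X) :
    tangentMinorant f g a m y =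
      ∑ i, ((2 / m - a / m ^ 2) * f (y i) -
        (f (y i) * ∑ j ∈ univ.erase i, g (y j)) / m ^ 2) :=
  sum_congr rfl fun i _ => by ring

end TangentMinorant

section ProductMeasure

variable {X ι : Type*} [MeasurableSpace X] [Fintype ι] {lam : Measure X}
  [IsProbabilityMeasure lam] {f g : X → ℝ}

theorem indepFun_comp_eval {i j : ι} (hij : i ≠ j) (hf : Measurable f) (hg : Measurable g) :
    IndepFun (fun y : ι → X => f (y i)) (fun y => g (y j)) (Measure.pi fun _ => lam) :=
  ((iIndepFun_pi (X := fun _ => id) fun _ => aemeasurable_id).indepFun hij).comp hf hg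

theorem integrable_comp_eval_mul_comp_eval {i j : ι} (hij : i ≠ j) (hf : Measurable f)
    (hg : Measurable g) (hfi : Integrable f lam) (hgi : Integrable g lam) :
    Integrable (fun y : ι → X => f (y i) * g (y j)) (Measure.pi fun _ => lam) :=
  (indepFun_comp_eval hij hf hg).integrable_mul (integrable_comp_eval hfi)
    (integrable_comp_eval hgi)

theorem integral_comp_eval_mul_comp_eval {i j : ι} (hij : i ≠ j) (hf : Measurable f)
    (hg : Measurable g) :
    ∫ y : ι → X, f (y i) * g (y j) ∂(Measure.pi fun _ => lam) =
      (∫ z, f z ∂lam) * ∫ z, g z ∂lam := by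
  rw [(indepFun_comp_eval hij hf hg).integral_fun_mul_eq_mul_integral
      (hf.comp (measurable_pi_apply i)).aestronglyMeasurable
      (hg.comp (measurable_pi_apply j)).aestronglyMeasurable,
    integral_comp_eval hf.aestronglyMeasurable, integral_comp_eval hg.aestronglyMeasurable]

variable [DecidableEq ι]

theorem integrable_comp_eval_mul_sum_erase (i : ι) (hf : Measurable f) (hg : Measurable g)
    (hfi : Integrable f lam) (hgi : Integrable g lam) :
    Integrable (fun y : ι → X => f (y i) * ∑ j ∈ univ.erase i, g (y j))
      (Measure.pi fun _ => lam) := by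
  simp_rw [mul_sum]
  exact integrable_finsetSum _ fun j hj =>
    integrable_comp_eval_mul_comp_eval (ne_of_mem_erase hj).symm hf hg hfi hgi

theorem integral_comp_eval_mul_sum_erase (i : ι) (hf : Measurable f) (hg : Measurable g)
    (hfi : Integrable f lam) (hgi : Integrable g lam) :
    ∫ y : ι → X, f (y i) * ∑ j ∈ univ.erase i, g (y j) ∂(Measure.pi fun _ => lam) =
      ((Fintype.card ι : ℝ) - 1) * ((∫ z, f z ∂lam) * ∫ z, g z ∂lam) := by
  simp_rw [mul_sum]
  rw [integral_finsetSum _ fun j hj =>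
      integrable_comp_eval_mul_comp_eval (ne_of_mem_erase hj).symm hf hg hfi hgi,
    sum_congr rfl fun j hj => integral_comp_eval_mul_comp_eval (ne_of_mem_erase hj).symm hf hg,
    sum_const, card_erase_of_mem (mem_univ i), card_univ, nsmul_eq_mul,
    Nat.cast_sub (Fintype.card_pos_iff.mpr ⟨i⟩), Nat.cast_one]

theorem integrable_tangentMinorant (hf : Measurable f) (hg : Measurable g)
    (hfi : Integrable f lam) (hgi : Integrable g lam) (a m : ℝ) :
    Integrable (fun y : ι → X => tangentMinorant f g a m y) (Measure.pi fun _ => lam) := by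
  simp_rw [tangentMinorant_eq]
  exact integrable_finsetSum _ fun i _ => ((integrable_comp_eval hfi).const_mul _).sub'
    ((integrable_comp_eval_mul_sum_erase i hf hg hfi hgi).div_const _)

theorem integral_tangentMinorant (hf : Measurable f) (hg : Measurable g)
    (hfi : Integrable f lam) (hgi : Integrable g lam) (a m : ℝ) :
    ∫ y : ι → X, tangentMinorant f g a m y ∂(Measure.pi fun _ => lam) =
      (Fintype.card ι : ℝ) * (∫ z, f z ∂lam) *
        (2 / m - (a + ((Fintype.card ι : ℝ) - 1) * ∫ z, g z ∂lam) / m ^ 2) := by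
  have hlin (i : ι) : Integrable (fun y : ι → X => (2 / m - a / m ^ 2) * f (y i))
      (Measure.pi fun _ => lam) := (integrable_comp_eval hfi).const_mul _
  have hquad (i : ι) :
      Integrable (fun y : ι → X => (f (y i) * ∑ j ∈ univ.erase i, g (y j)) / m ^ 2)
        (Measure.pi fun _ => lam) :=
    (integrable_comp_eval_mul_sum_erase i hf hg hfi hgi).div_const _
  have hf_eval (i : ι) :
      ∫ y : ι → X, f (y i) ∂(Measure.pi fun _ => lam) = ∫ z, f z ∂lam :=
    integral_comp_eval hfi.aestronglyMeasurable
  simp_rw [tangentMinorant_eq]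
  rw [integral_finsetSum _ fun i _ => (hlin i).sub' (hquad i)]
  simp only [integral_sub (hlin _) (hquad _), integral_const_mul, integral_div, hf_eval,
      integral_comp_eval_mul_sum_erase _ hf hg hfi hgi, sum_const, card_univ, nsmul_eq_mul]
  ring

end ProductMeasure

section ISIR

variable {X ι : Type*} [Fintype ι] {w : X → ℝ} {A : Set X} {x : X}

noncomputable def isirRatio (w : X → ℝ) (A : Set X) (x : X) (y : ι → X) : ℝ :=
  (w x * A.indicator (fun _ => (1 : ℝ)) x +
      ∑ i, w (y i) * A.indicator (fun _ => (1 : ℝ)) (y i)) /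
    (w x + ∑ i, w (y i))

theorem mul_indicator_one_mem_Icc (hw : ∀ z, 0 ≤ w z) (z : X) :
    w z * A.indicator (fun _ => (1 : ℝ)) z ∈ Set.Icc 0 (w z) := by
  by_cases hz : z ∈ A <;> simp [hz, hw z]

theorem isirRatio_mem_Icc (hw : ∀ z, 0 ≤ w z) (y : ι → X) :
    isirRatio w A x y ∈ Set.Icc 0 1 := by
  have hnum := mul_indicator_one_mem_Icc (A := A) hw
  have hden : 0 ≤ w x + ∑ i, w (y i) := add_nonneg (hw x) (sum_nonneg fun i _ => hw (y i))
  exact ⟨div_nonneg (add_nonneg (hnum x).1 (sum_nonneg fun i _ => (hnum (y i)).1)) hden,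
    div_le_one_of_le₀ (add_le_add (hnum x).2 (sum_le_sum fun i _ => (hnum (y i)).2)) hden⟩

theorem integrable_isirRatio [MeasurableSpace X] (μ : Measure (ι → X)) [IsFiniteMeasure μ]
    (hw_meas : Measurable w) (hw : ∀ z, 0 ≤ w z) (hA : MeasurableSet A) :
    Integrable (isirRatio w A x) μ := by
  have hA_meas : Measurable (A.indicator fun _ => (1 : ℝ)) := measurable_const.indicator hA
  have hmeas : Measurable (isirRatio w A x : (ι → X) → ℝ) := by
    unfold isirRatio
    fun_prop
  refine Integrable.of_bound (C := 1) hmeas.aestronglyMeasurable (ae_of_all _ fun y => ?_)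
  obtain ⟨h0, h1⟩ := isirRatio_mem_Icc (A := A) (x := x) hw y
  rwa [Real.norm_of_nonneg h0]

theorem sum_indicator_div_le_isirRatio (hw : ∀ z, 0 ≤ w z) (K : Set X) (y : ι → X) :
    ∑ i, (A ∩ K).indicator w (y i) / (w x + ∑ k, w (y k)) ≤ isirRatio w A x y := by
  rw [← sum_div]
  refine div_le_div_of_nonneg_right ?_ (add_nonneg (hw x) (sum_nonneg fun i _ => hw (y i)))
  refine le_add_of_nonneg_of_le (mul_indicator_one_mem_Icc hw x).1 (sum_le_sum fun i _ => ?_)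
  by_cases hy : y i ∈ A ∩ K
  · simp [hy, hy.1]
  · simpa [hy] using (mul_indicator_one_mem_Icc hw (y i)).1

theorem tangentMinorant_le_isirRatio [DecidableEq ι] (hw : ∀ z, 0 ≤ w z) {K : Set X} {W : ℝ}
    (hW : ∀ z ∈ K, w z ≤ W) (hx : x ∈ K) (m : ℝ) (y : ι → X) :
    tangentMinorant ((A ∩ K).indicator w) w (2 * W) m y ≤ isirRatio w A x y := by
  refine (sum_le_sum fun i _ => ?_).trans (sum_indicator_div_le_isirRatio hw K y)
  by_cases hy : y i ∈ A ∩ K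
  · rw [Set.indicator_of_mem hy]
    have hsplit := add_sum_erase univ (fun k => w (y k)) (mem_univ i)
    refine mul_two_div_sub_div_sq_le_div (hw _) ?_ ?_ m
    · linarith [hw x, single_le_sum (fun k _ => hw (y k)) (mem_univ i)]
    · linarith [hW x hx, hW (y i) hy.2]
  · simp [Set.indicator_of_notMem hy]

end ISIR

theorem stmt_6_general {X : Type*} [MeasurableSpace X] (lam π : Measure X)
    [IsProbabilityMeasure lam]
    (w : X → ℝ) (hw_meas : Measurable w) (hw_nonneg : ∀ x, 0 ≤ w x)
    (hw_int : Integrable w lam) (hw_pos : 0 < ∫ z, w z ∂lam)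
    (hπ : ∀ s : Set X, MeasurableSet s →
      (π s).toReal = (∫ x in s, w x ∂lam) / ∫ z, w z ∂lam)
    (K : Set X) (hK : MeasurableSet K)
    (wK : ℝ) (hwK : ∀ x ∈ K, w x / ∫ z, w z ∂lam ≤ wK)
    (hπK : 0 < (π K).toReal)
    (N : ℕ) (hN : 2 ≤ N) (x : X) (hx : x ∈ K) (A : Set X) (hA : MeasurableSet A) :
    ((N : ℝ) - 1) * (π K).toReal / (2 * wK + (N : ℝ) - 2) *
        ((π (A ∩ K)).toReal / (π K).toReal) ≤ isirP lam w N x A := by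
  set c := ∫ z, w z ∂lam
  set m := (2 * wK + N - 2) * c
  have hW : ∀ z ∈ K, w z ≤ wK * c := fun z hz => (div_le_iff₀ hw_pos).mp (hwK z hz)
  have hAK := hA.inter hK
  have hφ_meas := hw_meas.indicator hAK
  have hφ_int := hw_int.indicator hAK
  have hcard : (Fintype.card (Fin (N - 1)) : ℝ) = N - 1 := by
    rw [Fintype.card_fin, Nat.cast_sub (by omega), Nat.cast_one]
  calc ((N : ℝ) - 1) * (π K).toReal / (2 * wK + (N : ℝ) - 2) *
        ((π (A ∩ K)).toReal / (π K).toReal)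
      = ((N : ℝ) - 1) * (∫ z in A ∩ K, w z ∂lam) * m⁻¹ := by
        rw [hπ _ hAK, mul_inv]
        field_simp
    _ = ∫ y : Fin (N - 1) → X, tangentMinorant ((A ∩ K).indicator w) w (2 * (wK * c)) m y
          ∂(Measure.pi fun _ => lam) := by
        rw [integral_tangentMinorant hφ_meas hw_meas hφ_int hw_int, integral_indicator hAK, hcard,
          show 2 * (wK * c) + ((N : ℝ) - 1 - 1) * c = m by ring, two_div_sub_self_div_sq]
    _ ≤ ∫ y : Fin (N - 1) → X, isirRatio w A x y ∂(Measure.pi fun _ => lam) :=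
        integral_mono (integrable_tangentMinorant hφ_meas hw_meas hφ_int hw_int _ m)
          (integrable_isirRatio _ hw_meas hw_nonneg hA)
          (tangentMinorant_le_isirRatio hw_nonneg hW hx m)
    _ = isirP lam w N x A := rfl

/-- Local minorization of the i-SIR kernel on a set `K` where the normalized weight is
bounded by `wK` and which has positive target mass. -/
theorem stmt_6 {X : Type*} [MeasurableSpace X] (lam π : Measure X)
    [IsProbabilityMeasure lam] [IsProbabilityMeasure π]
    (w : X → ℝ) (hw_meas : Measurable w) (hw_nonneg : ∀ x, 0 ≤ w x)
    (hw_int : Integrable w lam) (hw_pos : 0 < ∫ z, w z ∂lam)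
    (hπ : ∀ s : Set X, MeasurableSet s →
      (π s).toReal = (∫ x in s, w x ∂lam) / ∫ z, w z ∂lam)
    (K : Set X) (hK : MeasurableSet K)
    (wK : ℝ) (hwK : ∀ x ∈ K, w x / ∫ z, w z ∂lam ≤ wK)
    (hπK : 0 < (π K).toReal)
    (N : ℕ) (hN : 2 ≤ N) (x : X) (hx : x ∈ K) (A : Set X) (hA : MeasurableSet A) :
    ((N : ℝ) - 1) * (π K).toReal / (2 * wK + (N : ℝ) - 2) *
        ((π (A ∩ K)).toReal / (π K).toReal) ≤ isirP lam w N x A :=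
  stmt_6_general lam π w hw_meas hw_nonneg hw_int hw_pos hπ K hK wK hwK hπK N hN x hx A hA
end

section
/- (Quadratic growth of the gradient.) Let $U: \mathbb{R}^d \to \mathbb{R}$ be twice continuously differentiable with $\nabla U(0)=0$, $\|D^2 U(x)\| \le L$ for all $x$, and suppose there exist $m>0$, $K \ge 0$ such that $D^2U(x)\{y\}^{\otimes 2} \ge m$ for all $x$ with $\|x\| \ge K$ and all unit vectors $y$. Then for all $x \in \mathbb{R}^d$, $\langle \nabla U(x), x\rangle \ge (m/2)\|x\|^2 - \tilde{C}\,\mathbf{1}_{\{\|x\| \le \tilde{K}\}}$, where $\tilde{K} = 2K(1 + L/m)$ and $\tilde{C} = L\tilde{K}^2$. -/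
/-!
Along the ray `t ↦ t • x` put `φ t = DU(t x) x`, so that `φ 0 = 0`, `φ 1 = ⟪∇U(x), x⟫` and
`φ' t = D²U(t x)[x, x]`. This derivative is at least `-L‖x‖²` everywhere and at least `m‖x‖²`
once `‖t x‖ ≥ K`, hence `⟪∇U(x), x⟫ ≥ m‖x‖² - (m + L) K ‖x‖ = m‖x‖ (‖x‖ - K̃ / 2)`. Outside the
ball of radius `K̃` this is at least `(m/2)‖x‖²`; inside it, the bound `m ≤ L` (forced by strong
convexity as soon as the space is nontrivial) gives `(m/2)‖x‖² - L K̃²`.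
-/

open scoped RealInnerProductSpace
open Set

theorem le_image_one_of_le_deriv {φ φ' : ℝ → ℝ} (hφ : ∀ t, HasDerivAt φ (φ' t) t)
    {A B t₀ : ℝ} (h₀ : 0 ≤ t₀) (h₁ : t₀ ≤ 1) (hA : ∀ t ∈ Ioo 0 t₀, A ≤ φ' t)
    (hB : ∀ t ∈ Ioo t₀ 1, B ≤ φ' t) :
    φ 0 + A * t₀ + B * (1 - t₀) ≤ φ 1 := by
  have hdiff : Differentiable ℝ φ := fun t => (hφ t).differentiableAt
  have mvt (a b C : ℝ) (hab : a ≤ b) (hC : ∀ t ∈ Ioo a b, C ≤ φ' t) :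
      C * (b - a) ≤ φ b - φ a := by
    refine (convex_Icc a b).mul_sub_le_image_sub_of_le_deriv hdiff.continuous.continuousOn
      hdiff.differentiableOn (fun t ht => ?_) a (left_mem_Icc.2 hab) b (right_mem_Icc.2 hab) hab
    rw [interior_Icc] at ht
    rw [(hφ t).deriv]
    exact hC t ht
  have := mvt 0 t₀ A h₀ hA
  have := mvt t₀ 1 B h₁ hB
  linarith

section Hessian

variable {E : Type*} [NormedAddCommGroup E] [NormedSpace ℝ E]

theorem abs_apply_self_le_mul_norm_sq {B : E →L[ℝ] E →L[ℝ] ℝ} {L : ℝ} (hB : ‖B‖ ≤ L) (y : E) :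
    |B y y| ≤ L * ‖y‖ ^ 2 :=
  calc |B y y| ≤ ‖B‖ * ‖y‖ * ‖y‖ := B.le_opNorm₂ y y
    _ ≤ L * ‖y‖ ^ 2 := by rw [mul_assoc, ← sq]; gcongr

theorem mul_norm_sq_le_apply_self {B : E →L[ℝ] E →L[ℝ] ℝ} {m : ℝ}
    (hB : ∀ y, ‖y‖ = 1 → m ≤ B y y) (y : E) : m * ‖y‖ ^ 2 ≤ B y y := by
  rcases eq_or_ne y 0 with rfl | hy
  · simp
  have hr : ‖y‖ ≠ 0 := norm_ne_zero_iff.2 hy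
  have hu : ‖‖y‖⁻¹ • y‖ = 1 := by rw [norm_smul, norm_inv, norm_norm, inv_mul_cancel₀ hr]
  calc m * ‖y‖ ^ 2 ≤ B (‖y‖⁻¹ • y) (‖y‖⁻¹ • y) * ‖y‖ ^ 2 := by gcongr; exact hB _ hu
    _ = B y y := by simp only [map_smul, smul_apply, smul_eq_mul]; field_simp

theorem le_opNorm_of_le_apply_self [Nontrivial E] {B : E →L[ℝ] E →L[ℝ] ℝ} {m : ℝ}
    (hB : ∀ y, ‖y‖ = 1 → m ≤ B y y) : m ≤ ‖B‖ := by
  obtain ⟨u, hu⟩ := exists_norm_eq E zero_le_one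
  calc m ≤ B u u := hB u hu
    _ ≤ ‖B‖ * ‖u‖ * ‖u‖ := (le_abs_self _).trans (B.le_opNorm₂ u u)
    _ = ‖B‖ := by rw [hu, mul_one, mul_one]

variable {U : E → ℝ}

theorem hasDerivAt_fderiv_smul_apply (hU : Differentiable ℝ (fderiv ℝ U)) (x : E) (t : ℝ) :
    HasDerivAt (fun s : ℝ => fderiv ℝ U (s • x) x) (fderiv ℝ (fderiv ℝ U) (t • x) x x) t := by
  have hline : HasDerivAt (fun s : ℝ => s • x) x t := by
    simpa using (hasDerivAt_id t).smul_const x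
  have hD : HasDerivAt (fun s : ℝ => fderiv ℝ U (s • x)) (fderiv ℝ (fderiv ℝ U) (t • x) x) t :=
    (hU (t • x)).hasFDerivAt.comp_hasDerivAt t hline
  simpa using hD.clm_apply (hasDerivAt_const t x)

theorem sub_mul_le_fderiv_apply_self (hU : Differentiable ℝ (fderiv ℝ U))
    (h₀ : fderiv ℝ U 0 = 0) {L m K : ℝ} (hL : ∀ x, ‖fderiv ℝ (fderiv ℝ U) x‖ ≤ L)
    (hm : 0 ≤ m) (hK : 0 ≤ K)
    (hconv : ∀ x, K ≤ ‖x‖ → ∀ y : E, ‖y‖ = 1 → m ≤ fderiv ℝ (fderiv ℝ U) x y y) (x : E) :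
    m * ‖x‖ ^ 2 - (m + L) * K * ‖x‖ ≤ fderiv ℝ U x x := by
  set H := fderiv ℝ (fderiv ℝ U)
  have hφ := hasDerivAt_fderiv_smul_apply hU x
  have hφ₀ : fderiv ℝ U ((0 : ℝ) • x) x = 0 := by simp [h₀]
  have hφ₁ : fderiv ℝ U ((1 : ℝ) • x) x = fderiv ℝ U x x := by rw [one_smul]
  have hlow (t : ℝ) : -(L * ‖x‖ ^ 2) ≤ H (t • x) x x :=
    neg_le_of_abs_le (abs_apply_self_le_mul_norm_sq (hL _) x)
  by_cases hxK : K < ‖x‖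
  · have hr : 0 < ‖x‖ := hK.trans_lt hxK
    have hB : ∀ t ∈ Ioo (K / ‖x‖) 1, m * ‖x‖ ^ 2 ≤ H (t • x) x x := fun t ht => by
      refine mul_norm_sq_le_apply_self (hconv _ ?_) x
      rw [norm_smul, Real.norm_of_nonneg ((div_nonneg hK hr.le).trans ht.1.le)]
      exact (div_le_iff₀ hr).1 ht.1.le
    have hray := le_image_one_of_le_deriv hφ (by positivity) ((div_le_one hr).2 hxK.le)
      (fun t _ => hlow t) hB
    rw [hφ₀, hφ₁] at hray
    have hKr : ‖x‖ ^ 2 * (K / ‖x‖) = K * ‖x‖ := by field_simp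
    linear_combination hray + (m + L) * hKr
  · have hray := le_image_one_of_le_deriv hφ zero_le_one le_rfl (fun t _ => hlow t)
      (B := 0) (by simp)
    rw [hφ₀, hφ₁] at hray
    have hL₀ : 0 ≤ L := (norm_nonneg (H 0)).trans (hL 0)
    have hsq : ‖x‖ * ‖x‖ ≤ K * ‖x‖ := by gcongr; linarith
    nlinarith

end Hessian

section Radius

variable {m L K r g : ℝ}

theorem half_mul_sq_le_of_lt_radius (hm : 0 < m) (hr₀ : 0 ≤ r)
    (hg : m * r ^ 2 - (m + L) * K * r ≤ g) (hr : 2 * K * (1 + L / m) < r) :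
    m / 2 * r ^ 2 ≤ g := by
  have hKt : (m + L) * K = m / 2 * (2 * K * (1 + L / m)) := by field_simp
  rw [hKt] at hg
  nlinarith [mul_le_mul_of_nonneg_left hr.le (mul_nonneg hm.le hr₀)]

theorem half_mul_sq_sub_le_of_le_radius (hm : 0 < m) (hL : 0 ≤ L) (hr₀ : 0 ≤ r)
    (hmL : 0 < r → m ≤ L) (hg : m * r ^ 2 - (m + L) * K * r ≤ g)
    (hr : r ≤ 2 * K * (1 + L / m)) :
    m / 2 * r ^ 2 - L * (2 * K * (1 + L / m)) ^ 2 ≤ g := by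
  set ρ := 2 * K * (1 + L / m)
  have hKt : (m + L) * K = m / 2 * ρ := by simp only [ρ]; field_simp
  rw [hKt] at hg
  rcases hr₀.eq_or_lt with rfl | hr₀
  · nlinarith [sq_nonneg ρ]
  · nlinarith [hmL hr₀, sq_nonneg (ρ - 2 * r), mul_nonneg hL (sq_nonneg ρ)]

end Radius

theorem stmt_14_general (d : ℕ) (U : EuclideanSpace ℝ (Fin d) → ℝ)
    (hU : ContDiff ℝ 2 U) (hgrad0 : gradient U 0 = 0)
    (L : ℝ)
    (hHessBdd : ∀ x, ‖fderiv ℝ (fun y => fderiv ℝ U y) x‖ ≤ L)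
    (m : ℝ) (hm : 0 < m) (K : ℝ) (hK : 0 ≤ K)
    (hconv : ∀ x, K ≤ ‖x‖ → ∀ y : EuclideanSpace ℝ (Fin d), ‖y‖ = 1 →
      m ≤ fderiv ℝ (fun z => fderiv ℝ U z) x y y) :
    ∀ x : EuclideanSpace ℝ (Fin d),
      m / 2 * ‖x‖ ^ 2 -
          (L * (2 * K * (1 + L / m)) ^ 2) *
            Set.indicator {z : EuclideanSpace ℝ (Fin d) | ‖z‖ ≤ 2 * K * (1 + L / m)}
              (fun _ => (1 : ℝ)) x ≤
        ⟪gradient U x, x⟫ := by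
  intro x
  have hD : Differentiable ℝ (fderiv ℝ U) := (hU.fderiv_right le_rfl).differentiable one_ne_zero
  have h₀ : fderiv ℝ U 0 = 0 := by simpa [gradient] using hgrad0
  have hL : 0 ≤ L := (norm_nonneg (fderiv ℝ (fderiv ℝ U) 0)).trans (hHessBdd 0)
  have hmL : 0 < ‖x‖ → m ≤ L := fun hx => by
    have := nontrivial_of_ne x 0 (norm_pos_iff.1 hx)
    obtain ⟨z, hz⟩ := exists_norm_eq (EuclideanSpace ℝ (Fin d)) hK
    exact (le_opNorm_of_le_apply_self (hconv z hz.ge)).trans (hHessBdd z)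
  have hg := sub_mul_le_fderiv_apply_self hD h₀ hHessBdd hm.le hK hconv x
  rw [← InnerProductSpace.toDual_symm_apply] at hg
  rw [indicator_apply]
  split_ifs with hx
  · rw [mul_one]
    exact half_mul_sq_sub_le_of_le_radius hm hL (norm_nonneg x) hmL hg hx
  · rw [mul_zero, sub_zero]
    exact half_mul_sq_le_of_lt_radius hm (norm_nonneg x) hg (not_le.1 hx)

/-- Quadratic growth of `⟪∇U(x), x⟫` for a potential with bounded Hessian that is
strongly convex outside a ball. -/
theorem stmt_14 (d : ℕ) (U : EuclideanSpace ℝ (Fin d) → ℝ)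
    (hU : ContDiff ℝ 2 U) (hgrad0 : gradient U 0 = 0)
    (L : ℝ) (hL : 0 ≤ L)
    (hHessBdd : ∀ x, ‖fderiv ℝ (fun y => fderiv ℝ U y) x‖ ≤ L)
    (m : ℝ) (hm : 0 < m) (K : ℝ) (hK : 0 ≤ K)
    (hconv : ∀ x, K ≤ ‖x‖ → ∀ y : EuclideanSpace ℝ (Fin d), ‖y‖ = 1 →
      m ≤ fderiv ℝ (fun z => fderiv ℝ U z) x y y) :
    ∀ x : EuclideanSpace ℝ (Fin d),
      m / 2 * ‖x‖ ^ 2 -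
          (L * (2 * K * (1 + L / m)) ^ 2) *
            Set.indicator {z : EuclideanSpace ℝ (Fin d) | ‖z‖ ≤ 2 * K * (1 + L / m)}
              (fun _ => (1 : ℝ)) x ≤
        ⟪gradient U x, x⟫ :=
  stmt_14_general d U hU hgrad0 L hHessBdd m hm K hK hconv
end
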